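/- In the inhomogeneous TASEP on a ring with λ = (4,3,2,1), the unnormalized stationary probability of the state (1,4,2,3) equals x₁²x₂(x₁+x₂+x₃), i.e., a monomial times the Schubert polynomial 𝔖₁₂₄₃ = x₁+x₂+x₃; concretely, the vector assigning to states beginning with 1 the values Ψ(1234)=x₁³x₂, Ψ(1243)=x₁²(x₁x₂+x₁x₃+x₂x₃), Ψ(1324)=x₁(x₁²x₂+x₁x₂²+x₁²x₃+x₁x₂x₃+x₂²x₃), Ψ(1342)=x₁x₂(x₁²+x₁x₂+x₂²), Ψ(1423)=x₁²x₂(x₁+x₂+x₃), Ψ(1432)=(x₁²+x₁x₂+x₂²)(x₁x₂+x₁x₃+x₂x₃), extended by cyclic symmetry, satisfies the global balance equations. -/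
import Mathlib


open Finset

/-- The transition probability `Pr(μ → ν)` (for `ν ≠ μ`) of the inhomogeneous
TASEP on a ring of 4 sites with `λ = (4,3,2,1)` and `y = 0`: states are
permutations (site `i` carries particle `μ i`, values `0,1,2,3` standing for
species `1,2,3,4`), and adjacent entries with `μ i < μ (i+1)` (indices mod 4)
swap with probability `x_{μ i}/4`; heavier-before-lighter pairs do not swap. -/
noncomputable def itasepRate (x : Fin 4 → ℝ) (μ ν : Equiv.Perm (Fin 4)) : ℝ :=
  (1/4 : ℝ) * ∑ i : Fin 4,
    if ν = μ * Equiv.swap i (i + 1) ∧ μ i < μ (i + 1) then x (μ i) else 0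

noncomputable def tG (x : Fin 4 → ℝ) (a b c : Fin 4) : ℝ :=
  if a = 0 ∧ b = 1 ∧ c = 2 then (x 0)^3 * x 1 else
  if a = 1 ∧ b = 2 ∧ c = 3 then (x 0)^3 * x 1 else
  if a = 2 ∧ b = 3 ∧ c = 0 then (x 0)^3 * x 1 else
  if a = 3 ∧ b = 0 ∧ c = 1 then (x 0)^3 * x 1 else
  if a = 0 ∧ b = 1 ∧ c = 3 then (x 0)^2 * (x 0 * x 1 + x 0 * x 2 + x 1 * x 2) else
  if a = 1 ∧ b = 3 ∧ c = 2 then (x 0)^2 * (x 0 * x 1 + x 0 * x 2 + x 1 * x 2) else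
  if a = 3 ∧ b = 2 ∧ c = 0 then (x 0)^2 * (x 0 * x 1 + x 0 * x 2 + x 1 * x 2) else
  if a = 2 ∧ b = 0 ∧ c = 1 then (x 0)^2 * (x 0 * x 1 + x 0 * x 2 + x 1 * x 2) else
  if a = 0 ∧ b = 2 ∧ c = 1 then x 0 * ((x 0)^2 * x 1 + x 0 * (x 1)^2 + (x 0)^2 * x 2 + x 0 * x 1 * x 2 + (x 1)^2 * x 2) else
  if a = 2 ∧ b = 1 ∧ c = 3 then x 0 * ((x 0)^2 * x 1 + x 0 * (x 1)^2 + (x 0)^2 * x 2 + x 0 * x 1 * x 2 + (x 1)^2 * x 2) else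
  if a = 1 ∧ b = 3 ∧ c = 0 then x 0 * ((x 0)^2 * x 1 + x 0 * (x 1)^2 + (x 0)^2 * x 2 + x 0 * x 1 * x 2 + (x 1)^2 * x 2) else
  if a = 3 ∧ b = 0 ∧ c = 2 then x 0 * ((x 0)^2 * x 1 + x 0 * (x 1)^2 + (x 0)^2 * x 2 + x 0 * x 1 * x 2 + (x 1)^2 * x 2) else
  if a = 0 ∧ b = 2 ∧ c = 3 then x 0 * x 1 * ((x 0)^2 + x 0 * x 1 + (x 1)^2) else
  if a = 2 ∧ b = 3 ∧ c = 1 then x 0 * x 1 * ((x 0)^2 + x 0 * x 1 + (x 1)^2) else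
  if a = 3 ∧ b = 1 ∧ c = 0 then x 0 * x 1 * ((x 0)^2 + x 0 * x 1 + (x 1)^2) else
  if a = 1 ∧ b = 0 ∧ c = 2 then x 0 * x 1 * ((x 0)^2 + x 0 * x 1 + (x 1)^2) else
  if a = 0 ∧ b = 3 ∧ c = 1 then (x 0)^2 * x 1 * (x 0 + x 1 + x 2) else
  if a = 3 ∧ b = 1 ∧ c = 2 then (x 0)^2 * x 1 * (x 0 + x 1 + x 2) else
  if a = 1 ∧ b = 2 ∧ c = 0 then (x 0)^2 * x 1 * (x 0 + x 1 + x 2) else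
  if a = 2 ∧ b = 0 ∧ c = 3 then (x 0)^2 * x 1 * (x 0 + x 1 + x 2) else
  if a = 0 ∧ b = 3 ∧ c = 2 then ((x 0)^2 + x 0 * x 1 + (x 1)^2) * (x 0 * x 1 + x 0 * x 2 + x 1 * x 2) else
  if a = 3 ∧ b = 2 ∧ c = 1 then ((x 0)^2 + x 0 * x 1 + (x 1)^2) * (x 0 * x 1 + x 0 * x 2 + x 1 * x 2) else
  if a = 2 ∧ b = 1 ∧ c = 0 then ((x 0)^2 + x 0 * x 1 + (x 1)^2) * (x 0 * x 1 + x 0 * x 2 + x 1 * x 2) else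
  if a = 1 ∧ b = 0 ∧ c = 3 then ((x 0)^2 + x 0 * x 1 + (x 1)^2) * (x 0 * x 1 + x 0 * x 2 + x 1 * x 2) else
  0


lemma neSwap (μ : Equiv.Perm (Fin 4)) (i : Fin 4) : μ ≠ μ * Equiv.swap i (i + 1) := by
  intro h
  have h1 : Equiv.swap i (i + 1) = 1 := (mul_left_cancel ((mul_one μ).symm ▸ h)).symm
  have h2 : i = i + 1 := Equiv.swap_eq_one_iff.mp h1
  revert h2
  fin_cases i <;> decide

lemma rate_self (x : Fin 4 → ℝ) (μ : Equiv.Perm (Fin 4)) : itasepRate x μ μ = 0 := by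
  unfold itasepRate
  rw [Finset.sum_eq_zero, mul_zero]
  intro i _
  rw [if_neg]
  rintro ⟨h1, -⟩
  exact neSwap μ i h1

lemma sumOut (x : Fin 4 → ℝ) (μ : Equiv.Perm (Fin 4)) :
    ∑ ν ∈ univ.filter (fun ν => ν ≠ μ), itasepRate x μ ν
      = (1/4 : ℝ) * ∑ i : Fin 4, if μ i < μ (i + 1) then x (μ i) else 0 := by
  rw [Finset.sum_filter_of_ne (by intro ν _ hν h; exact hν (h ▸ rate_self x μ))]
  unfold itasepRate
  rw [← Finset.mul_sum, Finset.sum_comm]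
  congr 1
  refine Finset.sum_congr rfl fun i _ => ?_
  by_cases hP : μ i < μ (i + 1) <;> simp [hP, Finset.sum_ite_eq']

lemma sumIn (x : Fin 4 → ℝ) (Ψ : Equiv.Perm (Fin 4) → ℝ) (μ : Equiv.Perm (Fin 4)) :
    ∑ ν ∈ univ.filter (fun ν => ν ≠ μ), Ψ ν * itasepRate x ν μ
      = (1/4 : ℝ) * ∑ i : Fin 4,
          if μ (i + 1) < μ i then Ψ (μ * Equiv.swap i (i + 1)) * x (μ (i + 1)) else 0 := by
  rw [Finset.sum_filter_of_ne (by
    intro ν _ hν h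
    subst h
    rw [rate_self, mul_zero] at hν
    exact hν rfl)]
  unfold itasepRate
  have key : ∀ ν : Equiv.Perm (Fin 4),
      Ψ ν * ((1/4 : ℝ) * ∑ i : Fin 4,
        if μ = ν * Equiv.swap i (i + 1) ∧ ν i < ν (i + 1) then x (ν i) else 0)
      = (1/4 : ℝ) * ∑ i : Fin 4,
        if μ = ν * Equiv.swap i (i + 1) ∧ ν i < ν (i + 1) then Ψ ν * x (ν i) else 0 := by
    intro ν
    rw [← mul_assoc, mul_comm (Ψ ν) (1/4 : ℝ), mul_assoc, Finset.mul_sum]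
    congr 1
    refine Finset.sum_congr rfl fun i _ => ?_
    rw [mul_ite, mul_zero]
  simp_rw [key]
  rw [← Finset.mul_sum, Finset.sum_comm]
  congr 1
  refine Finset.sum_congr rfl fun i _ => ?_
  rw [Finset.sum_eq_single (μ * Equiv.swap i (i + 1))]
  · have h1 : (μ * Equiv.swap i (i + 1)) * Equiv.swap i (i + 1) = μ := by
      rw [mul_assoc, Equiv.swap_mul_self, mul_one]
    have h2 : (μ * Equiv.swap i (i + 1)) i = μ (i + 1) := by
      rw [Equiv.Perm.mul_apply, Equiv.swap_apply_left]
    have h3 : (μ * Equiv.swap i (i + 1)) (i + 1) = μ i := by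
      rw [Equiv.Perm.mul_apply, Equiv.swap_apply_right]
    simp [h1, h2, h3]
  · intro ν _ hν
    rw [if_neg]
    rintro ⟨h, -⟩
    apply hν
    rw [h, mul_assoc, Equiv.swap_mul_self, mul_one]
  · intro h; exact absurd (Finset.mem_univ _) h



lemma sumOut' (x : Fin 4 → ℝ) (μ : Equiv.Perm (Fin 4)) :
    ∑ ν ∈ univ.filter (fun ν => ν ≠ μ), itasepRate x μ ν
      = (1/4 : ℝ) * ∑ i : Fin 4, ∑ a : Fin 4,
          if μ i = a ∧ μ i < μ (i + 1) then x a else 0 := by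
  rw [sumOut]
  congr 1
  refine Finset.sum_congr rfl fun i _ => ?_
  by_cases hP : μ i < μ (i + 1)
  · simp [hP, Finset.sum_ite_eq]
  · simp [hP]

lemma sumIn' (x : Fin 4 → ℝ) (Ψ : Equiv.Perm (Fin 4) → ℝ) (μ : Equiv.Perm (Fin 4)) :
    ∑ ν ∈ univ.filter (fun ν => ν ≠ μ), Ψ ν * itasepRate x ν μ
      = (1/4 : ℝ) * ∑ i : Fin 4, ∑ a : Fin 4,
          if μ (i + 1) = a ∧ μ (i + 1) < μ i
          then Ψ (μ * Equiv.swap i (i + 1)) * x a else 0 := by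
  rw [sumIn]
  congr 1
  refine Finset.sum_congr rfl fun i _ => ?_
  by_cases hP : μ (i + 1) < μ i
  · simp [hP, Finset.sum_ite_eq]
  · simp [hP]

set_option maxHeartbeats 1600000 in

/-- For the inhomogeneous TASEP on a ring with `λ = (4,3,2,1)`, the measure
assigning to the states `1234, 1243, 1324, 1342, 1423, 1432` the values
`Ψ(1234)=x₁³x₂`, `Ψ(1243)=x₁²(x₁x₂+x₁x₃+x₂x₃)`,
`Ψ(1324)=x₁(x₁²x₂+x₁x₂²+x₁²x₃+x₁x₂x₃+x₂²x₃)`, `Ψ(1342)=x₁x₂(x₁²+x₁x₂+x₂²)`,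
`Ψ(1423)=x₁²x₂(x₁+x₂+x₃)` (a monomial times the Schubert polynomial
`𝔖₁₂₄₃ = x₁+x₂+x₃`), `Ψ(1432)=(x₁²+x₁x₂+x₂²)(x₁x₂+x₁x₃+x₂x₃)`, extended to all
24 states by invariance under cyclic rotation, satisfies the global balance
equations. -/
theorem itasep_ring_stationary (x : Fin 4 → ℝ)
    (hx : ∀ i, 0 < x i) (hx1 : ∀ i, x i ≤ 1)
    (Ψ : Equiv.Perm (Fin 4) → ℝ)
    (hrot : ∀ μ, Ψ (μ * finRotate 4) = Ψ μ)
    (h1234 : ∀ μ : Equiv.Perm (Fin 4), μ 0 = 0 → μ 1 = 1 → μ 2 = 2 → μ 3 = 3 →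
      Ψ μ = (x 0)^3 * x 1)
    (h1243 : ∀ μ : Equiv.Perm (Fin 4), μ 0 = 0 → μ 1 = 1 → μ 2 = 3 → μ 3 = 2 →
      Ψ μ = (x 0)^2 * (x 0 * x 1 + x 0 * x 2 + x 1 * x 2))
    (h1324 : ∀ μ : Equiv.Perm (Fin 4), μ 0 = 0 → μ 1 = 2 → μ 2 = 1 → μ 3 = 3 →
      Ψ μ = x 0 * ((x 0)^2 * x 1 + x 0 * (x 1)^2 + (x 0)^2 * x 2
        + x 0 * x 1 * x 2 + (x 1)^2 * x 2))
    (h1342 : ∀ μ : Equiv.Perm (Fin 4), μ 0 = 0 → μ 1 = 2 → μ 2 = 3 → μ 3 = 1 →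
      Ψ μ = x 0 * x 1 * ((x 0)^2 + x 0 * x 1 + (x 1)^2))
    (h1423 : ∀ μ : Equiv.Perm (Fin 4), μ 0 = 0 → μ 1 = 3 → μ 2 = 1 → μ 3 = 2 →
      Ψ μ = (x 0)^2 * x 1 * (x 0 + x 1 + x 2))
    (h1432 : ∀ μ : Equiv.Perm (Fin 4), μ 0 = 0 → μ 1 = 3 → μ 2 = 2 → μ 3 = 1 →
      Ψ μ = ((x 0)^2 + x 0 * x 1 + (x 1)^2) * (x 0 * x 1 + x 0 * x 2 + x 1 * x 2)) :
    ∀ μ : Equiv.Perm (Fin 4),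
      Ψ μ * ∑ ν ∈ univ.filter (fun ν => ν ≠ μ), itasepRate x μ ν =
        ∑ ν ∈ univ.filter (fun ν => ν ≠ μ), Ψ ν * itasepRate x ν μ := by
    intro μ
    have key : ∀ ν : Equiv.Perm (Fin 4), Ψ ν = tG x (ν 0) (ν 1) (ν 2) := by
      have hr : ∀ ν : Equiv.Perm (Fin 4), Ψ ν = Ψ (ν * finRotate 4) := fun ν => (hrot ν).symm
      intro ν
      fin_cases ν
      all_goals
      · first
        | refine (h1234 _ (by decide) (by decide) (by decide) (by decide)).trans ?_
        | refine (h1243 _ (by decide) (by decide) (by decide) (by decide)).trans ?_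
        | refine (h1324 _ (by decide) (by decide) (by decide) (by decide)).trans ?_
        | refine (h1342 _ (by decide) (by decide) (by decide) (by decide)).trans ?_
        | refine (h1423 _ (by decide) (by decide) (by decide) (by decide)).trans ?_
        | refine (h1432 _ (by decide) (by decide) (by decide) (by decide)).trans ?_
        | (rw [hr]; first
          | refine (h1234 _ (by decide) (by decide) (by decide) (by decide)).trans ?_
          | refine (h1243 _ (by decide) (by decide) (by decide) (by decide)).trans ?_
          | refine (h1324 _ (by decide) (by decide) (by decide) (by decide)).trans ?_
          | refine (h1342 _ (by decide) (by decide) (by decide) (by decide)).trans ?_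
          | refine (h1423 _ (by decide) (by decide) (by decide) (by decide)).trans ?_
          | refine (h1432 _ (by decide) (by decide) (by decide) (by decide)).trans ?_
          | (rw [hr]; first
            | refine (h1234 _ (by decide) (by decide) (by decide) (by decide)).trans ?_
            | refine (h1243 _ (by decide) (by decide) (by decide) (by decide)).trans ?_
            | refine (h1324 _ (by decide) (by decide) (by decide) (by decide)).trans ?_
            | refine (h1342 _ (by decide) (by decide) (by decide) (by decide)).trans ?_
            | refine (h1423 _ (by decide) (by decide) (by decide) (by decide)).trans ?_
            | refine (h1432 _ (by decide) (by decide) (by decide) (by decide)).trans ?_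
            | (rw [hr]; first
              | refine (h1234 _ (by decide) (by decide) (by decide) (by decide)).trans ?_
              | refine (h1243 _ (by decide) (by decide) (by decide) (by decide)).trans ?_
              | refine (h1324 _ (by decide) (by decide) (by decide) (by decide)).trans ?_
              | refine (h1342 _ (by decide) (by decide) (by decide) (by decide)).trans ?_
              | refine (h1423 _ (by decide) (by decide) (by decide) (by decide)).trans ?_
              | refine (h1432 _ (by decide) (by decide) (by decide) (by decide)).trans ?_)))
        simp (config := { decide := true }) only [tG, if_true, if_false, true_and,
          and_true, ite_true, ite_false, and_false, false_and]
    rw [sumOut', sumIn']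
    simp only [key]
    simp only [Fin.sum_univ_four]
    fin_cases μ
    all_goals
    · simp (config := { decide := true }) only [tG, if_true, if_false, true_and,
        and_true, ite_true, ite_false, and_false, false_and]
      ring
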